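/- Let I be an almost reverse lexicographic ideal in R = k[x_1,...,x_n] whose last generator M_ω satisfies max M_ω = n, and let f = min{t : x_{n-1}^t ∈ I}. Then for every d with 1 ≤ d < f, one has H(R/I,d) > H(R/I,d-1). -/

import Mathlib

open scoped Classical

/-- Degree of an exponent vector (monomial). -/
def mdeg {n : ℕ} (m : Fin n → ℕ) : ℕ := ∑ i, m i

/-- Degree reverse lexicographic order: `M > N`. -/
def RevLexGT {n : ℕ} (M N : Fin n → ℕ) : Prop :=
  mdeg N < mdeg M ∨
    (mdeg M = mdeg N ∧ ∃ s : Fin n, (∀ i : Fin n, s < i → M i = N i) ∧ M s < N s)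

/-- A monomial ideal, identified with its set of monomials (exponent vectors),
is upward closed under divisibility. -/
def MonIdeal {n : ℕ} (I : Set (Fin n → ℕ)) : Prop :=
  ∀ m ∈ I, ∀ m' : Fin n → ℕ, (∀ i, m i ≤ m' i) → m' ∈ I

/-- `m` is a minimal generator of the monomial ideal `I`. -/
def MinGen {n : ℕ} (I : Set (Fin n → ℕ)) (m : Fin n → ℕ) : Prop :=
  m ∈ I ∧ ∀ m' ∈ I, (∀ i, m' i ≤ m i) → m' = m

/-- Almost reverse lexicographic ideal. -/
def ARL {n : ℕ} (I : Set (Fin n → ℕ)) : Prop :=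
  ∀ M N : Fin n → ℕ, MinGen I N → mdeg M = mdeg N → RevLexGT M N → M ∈ I

/-- Strongly stable monomial ideal. -/
def StronglyStable {n : ℕ} (I : Set (Fin n → ℕ)) : Prop :=
  MonIdeal I ∧ ∀ M ∈ I, ∀ i j : Fin n, j < i → 0 < M i →
    (fun k => if k = i then M i - 1 else if k = j then M j + 1 else M k) ∈ I

/-- The last generator `M_ω` of a monomial ideal: a minimal generator of maximal
degree which is smallest in the degree reverse lexicographic order among the
minimal generators of that degree. -/
def IsLastGen {n : ℕ} (I : Set (Fin n → ℕ)) (W : Fin n → ℕ) : Prop :=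
  MinGen I W ∧ (∀ N, MinGen I N → mdeg N ≤ mdeg W) ∧
    (∀ N, MinGen I N → mdeg N = mdeg W → N = W ∨ RevLexGT N W)

/-- `max M`: the largest (1-based) index of a variable dividing `M` (0 for `M = 1`). -/
def maxVar {n : ℕ} (m : Fin n → ℕ) : ℕ :=
  Finset.univ.sup (fun i : Fin n => if 0 < m i then i.1 + 1 else 0)

/-- Hilbert function of `R/I`: the number of monomials of degree `d` not in `I`. -/
noncomputable def hilb {n : ℕ} (I : Set (Fin n → ℕ)) (d : ℕ) : ℕ :=
  Set.ncard {m : Fin n → ℕ | mdeg m = d ∧ m ∉ I}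

/-- Truncation of an exponent vector to its first `i` coordinates. -/
def truncW {n : ℕ} (W : Fin n → ℕ) (i : ℕ) : Fin n → ℕ :=
  fun j => if j.1 < i then W j else 0

/-- The set `𝓘_i` (for `i ≤ μ-2`): exponent vectors supported on the first `i`
coordinates, coordinatewise below the `f_j`'s, i.e. not lying in `I`. -/
def Iset {n : ℕ} (I : Set (Fin n → ℕ)) (i : ℕ) : Set (Fin n → ℕ) :=
  {α | (∀ k : Fin n, i ≤ k.1 → α k = 0) ∧ α ∉ I}

/-- The set `𝓘_{μ-1}`, which additionally requires `α ≥ (ω_1,…,ω_{μ-1})`. -/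
def IsetLast {n : ℕ} (I : Set (Fin n → ℕ)) (W : Fin n → ℕ) (μ : ℕ) :
    Set (Fin n → ℕ) :=
  {α | α ∈ Iset I (μ - 1) ∧ (α = truncW W (μ - 1) ∨ RevLexGT α (truncW W (μ - 1)))}

/-- `f_{i+1}(α) = min {t : x^α x_{i+1}^t ∈ I}` (ℕ-valued, junk `0` if no such `t`). -/
noncomputable def fmin {n : ℕ} (I : Set (Fin n → ℕ)) (α : Fin n → ℕ) (i : Fin n) : ℕ :=
  sInf {t | α + Pi.single i t ∈ I}

/-- `f_{i+1}(α)` valued in `ℕ∞` (equal to `⊤` when no power works). -/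
noncomputable def fminTop {n : ℕ} (I : Set (Fin n → ℕ)) (α : Fin n → ℕ) (i : Fin n) : ℕ∞ :=
  sInf ((fun t : ℕ => (t : ℕ∞)) '' {t | α + Pi.single i t ∈ I})

/-- Iterated truncated difference sequence `h^{(i)}`. -/
def hseq (h : ℕ → ℕ) : ℕ → ℕ → ℕ
  | 0, d => h d
  | _ + 1, 0 => 1
  | i + 1, e + 1 => hseq h i (e + 1) - hseq h i e

/-- The set whose infimum is `r_i(h)`. -/
def rset (h : ℕ → ℕ) (i : ℕ) : Set ℕ :=
  {d | 1 ≤ d ∧ hseq h i d ≤ hseq h i (d - 1)}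

/-- `D(h) = min {i : r_i < ∞}`. -/
noncomputable def Dval (h : ℕ → ℕ) : ℕ := sInf {i | (rset h i).Nonempty}

/-- `h` is unimodal at each tail. -/
def UnimodalAtTails (h : ℕ → ℕ) : Prop :=
  ∀ i, Dval h ≤ i → i < max 1 (h 1) →
    ∀ d, (∃ r ∈ rset h i, r ≤ d) → hseq h i d ≤ hseq h i (d - 1)

/-- The polynomial `Π (1 - z^{d_i})`. -/
noncomputable def froPoly (ds : List ℕ) : Polynomial ℤ :=
  (ds.map (fun d => 1 - Polynomial.X ^ d)).prod

/-- Coefficient of `z^i` in the power series `Π (1 - z^{d_i}) / (1-z)^n`. -/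
noncomputable def froCoeff (n : ℕ) (ds : List ℕ) (i : ℕ) : ℤ :=
  ∑ j ∈ Finset.range (i + 1),
    (froPoly ds).coeff j * (Nat.choose (n - 1 + (i - j)) (i - j) : ℤ)

/-- The Fröberg sequence `|n; d_1,…,d_m|`: the truncation `| · |` of the power
series `Π (1 - z^{d_i}) / (1-z)^n`. -/
noncomputable def fro (n : ℕ) (ds : List ℕ) (i : ℕ) : ℕ :=
  if ∀ j ≤ i, 0 < froCoeff n ds j then (froCoeff n ds i).toNat else 0

/-!
Multiplication by the last variable `x_n` embeds the standard monomials of degree `d - 1` into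
those of degree `d`, and misses `x_{n-1}^d`, which is standard since `d < f`. For the embedding:
if `m ∉ I` but `x_n m ∈ I`, some minimal generator `G` dividing `x_n m` is divisible by `x_n`
(otherwise `G ∣ m`) and has degree at most `d`. Then `x_{n-1}^{deg G}` is larger than `G` in
the reverse lexicographic order, so it lies in `I` by the ARL property, contradicting `deg G < f`.
-/

lemma mdeg_add {n : ℕ} (m m' : Fin n → ℕ) : mdeg (m + m') = mdeg m + mdeg m' :=
  Finset.sum_add_distrib

lemma mdeg_single {n : ℕ} (v : Fin n) (e : ℕ) : mdeg (Pi.single v e) = e := by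
  simp [mdeg]

lemma finite_setOf_mdeg_eq (n d : ℕ) : {m : Fin n → ℕ | mdeg m = d}.Finite :=
  (Finset.Nat.antidiagonalTuple n d).finite_toSet.subset fun _ hm =>
    Finset.Nat.mem_antidiagonalTuple.2 hm

lemma exists_minGen_le {n : ℕ} {I : Set (Fin n → ℕ)} {N : Fin n → ℕ} (hN : N ∈ I) :
    ∃ G, MinGen I G ∧ G ≤ N := by
  obtain ⟨G, ⟨hGI, hGN⟩, hGmin⟩ :=
    wellFounded_lt.has_min {m | m ∈ I ∧ m ≤ N} ⟨N, hN, le_rfl⟩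
  refine ⟨G, ⟨hGI, fun m hm hmG => ?_⟩, hGN⟩
  by_contra hne
  exact hGmin m ⟨hm, le_trans hmG hGN⟩ (lt_of_le_of_ne hmG hne)

lemma revLexGT_single_of_pos_last {n : ℕ} {v : Fin (n + 1)} (hv : v ≠ Fin.last n)
    {G : Fin (n + 1) → ℕ} (hG : 0 < G (Fin.last n)) :
    RevLexGT (Pi.single v (mdeg G)) G :=
  .inr ⟨mdeg_single v _, Fin.last n, fun i hi => absurd hi (Fin.le_last i).not_gt,
    by simpa [Pi.single_apply, hv.symm] using hG⟩

lemma ARL.single_mem_of_minGen {n : ℕ} {I : Set (Fin (n + 1) → ℕ)} (hARL : ARL I)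
    {v : Fin (n + 1)} (hv : v ≠ Fin.last n) {G : Fin (n + 1) → ℕ} (hG : MinGen I G)
    (hGlast : 0 < G (Fin.last n)) : Pi.single v (mdeg G) ∈ I :=
  hARL _ G hG (mdeg_single v _) (revLexGT_single_of_pos_last hv hGlast)

lemma add_single_last_notMem {n : ℕ} {I : Set (Fin (n + 1) → ℕ)} (hI : MonIdeal I)
    (hARL : ARL I) {v : Fin (n + 1)} (hv : v ≠ Fin.last n) {m : Fin (n + 1) → ℕ}
    (hvI : ∀ t ≤ mdeg m + 1, Pi.single v t ∉ I) (hm : m ∉ I) :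
    m + Pi.single (Fin.last n) 1 ∉ I := by
  intro hmI
  obtain ⟨G, hG, hGle⟩ := exists_minGen_le hmI
  have hGlast : 0 < G (Fin.last n) := by
    refine Nat.pos_of_ne_zero fun h0 => hm (hI G hG.1 m fun i => ?_)
    rcases eq_or_ne i (Fin.last n) with rfl | hi
    · simp [h0]
    · simpa [hi] using hGle i
  have hGdeg : mdeg G ≤ mdeg m + 1 :=
    calc mdeg G ≤ mdeg (m + Pi.single (Fin.last n) 1) := Finset.sum_le_sum fun i _ => hGle i
      _ = mdeg m + 1 := by rw [mdeg_add, mdeg_single]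
  exact hvI _ hGdeg (hARL.single_mem_of_minGen hv hG hGlast)

lemma hilb_lt_hilb_succ {n : ℕ} {I : Set (Fin n → ℕ)} (w : Fin n) {e : ℕ}
    (hmul : ∀ m, mdeg m = e → m ∉ I → m + Pi.single w 1 ∉ I)
    (hmiss : ∃ m, mdeg m = e + 1 ∧ m ∉ I ∧ m w = 0) :
    hilb I e < hilb I (e + 1) := by
  obtain ⟨x, hxdeg, hxI, hxw⟩ := hmiss
  have hinj : Set.InjOn (· + Pi.single w 1) {m : Fin n → ℕ | mdeg m = e ∧ m ∉ I} :=
    fun a _ b _ h => add_left_injective _ h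
  have hsub : (· + Pi.single w 1) '' {m : Fin n → ℕ | mdeg m = e ∧ m ∉ I} ⊂
      {m | mdeg m = e + 1 ∧ m ∉ I} := by
    refine ⟨?_, fun hsup => ?_⟩
    · rintro _ ⟨m, ⟨hmdeg, hmI⟩, rfl⟩
      exact ⟨by rw [mdeg_add, mdeg_single, hmdeg], hmul m hmdeg hmI⟩
    · obtain ⟨m, -, hm⟩ := hsup ⟨hxdeg, hxI⟩
      simp [← hm] at hxw
  rw [hilb, hilb, ← hinj.ncard_image]
  exact Set.ncard_lt_ncard hsub ((finite_setOf_mdeg_eq n (e + 1)).subset fun m hm => hm.1)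

/-- For an ARL ideal with `max M_ω = n` and `1 ≤ d < f = min{t : x_{n-1}^t ∈ I}`,
the Hilbert function strictly increases: `H(R/I,d-1) < H(R/I,d)`. -/
theorem arl_hilbert_strict_increase {n : ℕ} (I : Set (Fin (n + 2) → ℕ))
    (hI : MonIdeal I) (hARL : ARL I)
    (d : ℕ) (hd1 : 1 ≤ d)
    (hd : d < sInf {t | Pi.single (⟨n, by omega⟩ : Fin (n + 2)) t ∈ I}) :
    hilb I (d - 1) < hilb I d := by
  obtain ⟨e, rfl⟩ : ∃ e, d = e + 1 := ⟨d - 1, by omega⟩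
  set v : Fin (n + 2) := ⟨n, by omega⟩
  have hv : v ≠ Fin.last (n + 1) := by simp [v, Fin.ext_iff]
  have hvI : ∀ t ≤ e + 1, Pi.single v t ∉ I := fun t ht hvt =>
    Nat.notMem_of_lt_sInf (m := t) (hd.trans_le' ht) hvt
  rw [Nat.add_sub_cancel]
  refine hilb_lt_hilb_succ (Fin.last (n + 1)) (fun m hm => ?_) ⟨Pi.single v (e + 1), ?_, ?_, ?_⟩
  · exact add_single_last_notMem hI hARL hv (hm ▸ hvI)
  · exact mdeg_single v _
  · exact hvI _ le_rfl
  · simp [hv.symm]
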